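/- arXiv:1511.06239 — 3 statements merged into one kernel-verified Lean document; each statement's English description precedes it below -/
import Mathlib

section
/- An orthogonal transformation A of ℝ⁴ commutes with each of the three real Pauli matrices P₀, P₁, P₂ if and only if A is of the form a·Id + b·L, where L = P₀P₁P₂ and a² + b² = 1. -/
open Matrix

/-- The complex structure `N₀₁ = [[0,-1],[1,0]]` on `ℝ²`. -/
def N01 : Matrix (Fin 2) (Fin 2) ℝ := !![0, -1; 1, 0]

/-- `P₀ = [[0,Id],[Id,0]]` with 2×2 blocks. -/
def P0 : Matrix (Fin 2 ⊕ Fin 2) (Fin 2 ⊕ Fin 2) ℝ := Matrix.fromBlocks 0 1 1 0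

/-- `P₁ = [[0,-N₀₁],[N₀₁,0]]` with 2×2 blocks. -/
def P1 : Matrix (Fin 2 ⊕ Fin 2) (Fin 2 ⊕ Fin 2) ℝ := Matrix.fromBlocks 0 (-N01) N01 0

/-- `P₂ = [[Id,0],[0,-Id]]` with 2×2 blocks. -/
def P2 : Matrix (Fin 2 ⊕ Fin 2) (Fin 2 ⊕ Fin 2) ℝ := Matrix.fromBlocks 1 0 0 (-1)

lemma L_eq : P0 * P1 * P2 = Matrix.fromBlocks N01 0 0 N01 := by
  simp [P0, P1, P2, Matrix.fromBlocks_multiply]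

lemma comm_N (B : Matrix (Fin 2) (Fin 2) ℝ) (h : B * N01 = N01 * B) :
    B = B 0 0 • (1 : Matrix (Fin 2) (Fin 2) ℝ) + B 1 0 • N01 := by
  have h00 := congrFun (congrFun h 0) 0
  have h10 := congrFun (congrFun h 1) 0
  have h01 := congrFun (congrFun h 0) 1
  have h11 := congrFun (congrFun h 1) 1
  simp [Matrix.mul_apply, Fin.sum_univ_two, N01] at h00 h10 h01 h11
  ext i j
  fin_cases i <;> fin_cases j <;>
    simp [N01, Matrix.one_apply] <;> linarith

theorem stmt_5 (A : Matrix (Fin 2 ⊕ Fin 2) (Fin 2 ⊕ Fin 2) ℝ) (hA : Aᵀ * A = 1) :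
    (A * P0 = P0 * A ∧ A * P1 = P1 * A ∧ A * P2 = P2 * A) ↔
      ∃ a b : ℝ, a ^ 2 + b ^ 2 = 1 ∧ A = a • (1 : Matrix _ _ ℝ) + b • (P0 * P1 * P2) := by
  rw [L_eq]
  constructor
  · rintro ⟨h0, h1, h2⟩
    have hAblocks : A = Matrix.fromBlocks A.toBlocks₁₁ A.toBlocks₁₂ A.toBlocks₂₁ A.toBlocks₂₂ :=
      (Matrix.fromBlocks_toBlocks A).symm
    set B := A.toBlocks₁₁
    set C := A.toBlocks₁₂
    set D := A.toBlocks₂₁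
    set E := A.toBlocks₂₂
    simp only [P0, P1, P2] at h0 h1 h2
    rw [hAblocks, Matrix.fromBlocks_multiply, Matrix.fromBlocks_multiply,
      Matrix.fromBlocks_inj] at h0 h1 h2
    simp only [Matrix.mul_zero, Matrix.mul_one, Matrix.one_mul, Matrix.zero_mul,
      Matrix.mul_neg, Matrix.neg_mul, Matrix.mul_one, zero_add, add_zero] at h0 h1 h2
    have hC0 : C = 0 := by
      have h2' : -C = C := h2.2.1
      have h' : C + C = 0 := by nth_rewrite 1 [← h2']; exact neg_add_cancel C
      have : (2 : ℝ) • C = 0 := by rw [two_smul]; exact h'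
      simpa using this
    have hD0 : D = 0 := by
      have h2' : D = -D := h2.2.2.1
      have h' : D + D = 0 := by nth_rewrite 1 [h2']; exact neg_add_cancel D
      have : (2 : ℝ) • D = 0 := by rw [two_smul]; exact h'
      simpa using this
    have hEB : E = B := h0.2.1.symm
    have hcomm : B * N01 = N01 * B := by
      have := h1.2.2.1
      rw [hEB] at this
      exact this
    have hBform := comm_N B hcomm
    refine ⟨B 0 0, B 1 0, ?_, ?_⟩
    · rw [hAblocks, hC0, hD0, hEB] at hA
      have := congrFun (congrFun hA (Sum.inl 0)) (Sum.inl 0)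
      simp [Matrix.mul_apply, Fintype.sum_sum_type, Fin.sum_univ_two,
        Matrix.one_apply] at this
      nlinarith [this]
    · rw [hAblocks, hC0, hD0, hEB]
      rw [← Matrix.fromBlocks_one, Matrix.fromBlocks_smul, Matrix.fromBlocks_smul,
        Matrix.fromBlocks_add]
      simp only [smul_zero, add_zero, zero_add]
      rw [← hBform]
  · rintro ⟨a, b, hab, rfl⟩
    refine ⟨?_, ?_, ?_⟩ <;>
    · rw [Matrix.add_mul, Matrix.mul_add, Matrix.smul_mul, Matrix.mul_smul,
        Matrix.smul_mul, Matrix.mul_smul, Matrix.one_mul, Matrix.mul_one]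
      congr 1
      simp only [P0, P1, P2]
      simp [Matrix.fromBlocks_multiply]
end

section
/- The nine symmetric involutions S₀,...,S₈ on ℝ¹⁶ ≅ 𝕆² defined by S₀ = [[0,Id],[Id,0]], S_α = [[0,-R_{e_α}],[R_{e_α},0]] for α = 1,...,7 where e₁,...,e₇ = i,j,k,e,f,g,h are the imaginary unit octonions of the standard basis, and S₈ = [[Id,0],[0,-Id]], form a Clifford system C₈ on ℝ¹⁶: each S_α is symmetric, S_α² = Id, and S_αS_β = -S_βS_α for α ≠ β. -/
noncomputable section

/-- The octonions, built from pairs of quaternions by the Cayley–Dickson construction. -/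
abbrev Oct : Type := Quaternion ℝ × Quaternion ℝ

/-- Cayley–Dickson multiplication of octonions: `(a,b)(c,d) = (ac - d̄b, da + bc̄)`. -/
def octMul (x y : Oct) : Oct :=
  (x.1 * y.1 - star y.2 * x.2, y.2 * x.1 + x.2 * star y.1)

/-- The standard inner product on the octonions `𝕆 ≅ ℝ⁸`. -/
def octInner (x y : Oct) : ℝ := (x.1 * star y.1).re + (x.2 * star y.2).re

/-- The standard inner product on `𝕆² ≅ ℝ¹⁶`. -/
def octInner2 (p q : Oct × Oct) : ℝ := octInner p.1 q.1 + octInner p.2 q.2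

/-- The seven imaginary unit octonions `i, j, k, e, f, g, h` of the standard basis. -/
def imOct : Fin 7 → Oct :=
  ![((⟨0, 1, 0, 0⟩ : Quaternion ℝ), 0), ((⟨0, 0, 1, 0⟩ : Quaternion ℝ), 0),
    ((⟨0, 0, 0, 1⟩ : Quaternion ℝ), 0), (0, 1),
    (0, (⟨0, 1, 0, 0⟩ : Quaternion ℝ)), (0, (⟨0, 0, 1, 0⟩ : Quaternion ℝ)),
    (0, (⟨0, 0, 0, 1⟩ : Quaternion ℝ))]

/-- The block operator `[[0, -R_u],[R_u, 0]]` on `𝕆²`. -/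
def Sblk (u : Oct) : Oct × Oct → Oct × Oct := fun p => (-octMul p.2 u, octMul p.1 u)

/-- The nine involutions `S₀, …, S₈` of the standard `Spin(9)` Clifford system on `ℝ¹⁶ ≅ 𝕆²`. -/
def S9 : Fin 9 → Oct × Oct → Oct × Oct :=
  ![fun p => (p.2, p.1),
    Sblk (imOct 0), Sblk (imOct 1), Sblk (imOct 2), Sblk (imOct 3),
    Sblk (imOct 4), Sblk (imOct 5), Sblk (imOct 6),
    fun p => (p.1, -p.2)]

lemma S9_0 (h : (0:ℕ) < 9) : S9 ⟨0, h⟩ = fun p => (p.2, p.1) := rfl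
lemma S9_1 (h : (1:ℕ) < 9) : S9 ⟨1, h⟩ = Sblk ((⟨0,1,0,0⟩ : Quaternion ℝ), 0) := rfl
lemma S9_2 (h : (2:ℕ) < 9) : S9 ⟨2, h⟩ = Sblk ((⟨0,0,1,0⟩ : Quaternion ℝ), 0) := rfl
lemma S9_3 (h : (3:ℕ) < 9) : S9 ⟨3, h⟩ = Sblk ((⟨0,0,0,1⟩ : Quaternion ℝ), 0) := rfl
lemma S9_4 (h : (4:ℕ) < 9) : S9 ⟨4, h⟩ = Sblk ((0 : Quaternion ℝ), (1 : Quaternion ℝ)) := rfl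
lemma S9_5 (h : (5:ℕ) < 9) : S9 ⟨5, h⟩ = Sblk ((0 : Quaternion ℝ), (⟨0,1,0,0⟩ : Quaternion ℝ)) := rfl
lemma S9_6 (h : (6:ℕ) < 9) : S9 ⟨6, h⟩ = Sblk ((0 : Quaternion ℝ), (⟨0,0,1,0⟩ : Quaternion ℝ)) := rfl
lemma S9_7 (h : (7:ℕ) < 9) : S9 ⟨7, h⟩ = Sblk ((0 : Quaternion ℝ), (⟨0,0,0,1⟩ : Quaternion ℝ)) := rfl
lemma S9_8 (h : (8:ℕ) < 9) : S9 ⟨8, h⟩ = fun p => (p.1, -p.2) := rfl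
lemma qsub_zero (a b c d : ℝ) : @HSub.hSub (Quaternion ℝ) (Quaternion ℝ) (Quaternion ℝ) _ ⟨a, b, c, d⟩ 0 = (⟨a, b, c, d⟩ : Quaternion ℝ) := sub_zero _
lemma qzero_sub (a b c d : ℝ) : @HSub.hSub (Quaternion ℝ) (Quaternion ℝ) (Quaternion ℝ) _ 0 ⟨a, b, c, d⟩ = (⟨-a, -b, -c, -d⟩ : Quaternion ℝ) := by
  exact (zero_sub _).trans rfl
lemma qadd_zero (a b c d : ℝ) : @HAdd.hAdd (Quaternion ℝ) (Quaternion ℝ) (Quaternion ℝ) _ ⟨a, b, c, d⟩ 0 = (⟨a, b, c, d⟩ : Quaternion ℝ) := add_zero _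
lemma qzero_add (a b c d : ℝ) : @HAdd.hAdd (Quaternion ℝ) (Quaternion ℝ) (Quaternion ℝ) _ 0 ⟨a, b, c, d⟩ = (⟨a, b, c, d⟩ : Quaternion ℝ) := zero_add _
lemma qneg_mk (a b c d : ℝ) : @Neg.neg (Quaternion ℝ) _ ⟨a, b, c, d⟩ = (⟨-a, -b, -c, -d⟩ : Quaternion ℝ) := rfl
lemma qadd_mk (a b c d a' b' c' d' : ℝ) : @HAdd.hAdd (Quaternion ℝ) (Quaternion ℝ) (Quaternion ℝ) _ ⟨a, b, c, d⟩ ⟨a', b', c', d'⟩ = (⟨a + a', b + b', c + c', d + d'⟩ : Quaternion ℝ) := rfl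
lemma qsub_mk (a b c d a' b' c' d' : ℝ) : @HSub.hSub (Quaternion ℝ) (Quaternion ℝ) (Quaternion ℝ) _ ⟨a, b, c, d⟩ ⟨a', b', c', d'⟩ = (⟨a - a', b - b', c - c', d - d'⟩ : Quaternion ℝ) := rfl
lemma qmul_mk (p : Quaternion ℝ) (a b c d : ℝ) : @HMul.hMul (Quaternion ℝ) (Quaternion ℝ) (Quaternion ℝ) _ p ⟨a, b, c, d⟩ =
    ⟨p.re * a - p.imI * b - p.imJ * c - p.imK * d, p.re * b + p.imI * a + p.imJ * d - p.imK * c,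
     p.re * c - p.imI * d + p.imJ * a + p.imK * b, p.re * d + p.imI * c - p.imJ * b + p.imK * a⟩ := by
  set q : Quaternion ℝ := ⟨a, b, c, d⟩ with hq
  have h1 : q.re = a := rfl
  have h2 : q.imI = b := rfl
  have h3 : q.imJ = c := rfl
  have h4 : q.imK = d := rfl
  ext <;> simp only [Quaternion.re_mul, Quaternion.imI_mul, Quaternion.imJ_mul, Quaternion.imK_mul, h1, h2, h3, h4] <;> rfl
lemma qmk_mul (p : Quaternion ℝ) (a b c d : ℝ) : @HMul.hMul (Quaternion ℝ) (Quaternion ℝ) (Quaternion ℝ) _ ⟨a, b, c, d⟩ p =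
    ⟨a * p.re - b * p.imI - c * p.imJ - d * p.imK, a * p.imI + b * p.re + c * p.imK - d * p.imJ,
     a * p.imJ - b * p.imK + c * p.re + d * p.imI, a * p.imK + b * p.imJ - c * p.imI + d * p.re⟩ := by
  set q : Quaternion ℝ := ⟨a, b, c, d⟩ with hq
  have h1 : q.re = a := rfl
  have h2 : q.imI = b := rfl
  have h3 : q.imJ = c := rfl
  have h4 : q.imK = d := rfl
  ext <;> simp only [Quaternion.re_mul, Quaternion.imI_mul, Quaternion.imJ_mul, Quaternion.imK_mul, h1, h2, h3, h4] <;> rfl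
lemma qstar_mk (a b c d : ℝ) : @star (Quaternion ℝ) _ ⟨a, b, c, d⟩ = (⟨a, -b, -c, -d⟩ : Quaternion ℝ) := by
  set q : Quaternion ℝ := ⟨a, b, c, d⟩ with hq
  have h1 : q.re = a := rfl
  have h2 : q.imI = b := rfl
  have h3 : q.imJ = c := rfl
  have h4 : q.imK = d := rfl
  ext <;> simp only [Quaternion.re_star, Quaternion.imI_star, Quaternion.imJ_star, Quaternion.imK_star, h1, h2, h3, h4] <;> rfl

lemma qmk_mul_mk (a b c d a' b' c' d' : ℝ) : @HMul.hMul (Quaternion ℝ) (Quaternion ℝ) (Quaternion ℝ) _ ⟨a, b, c, d⟩ ⟨a', b', c', d'⟩ =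
    (⟨a * a' - b * b' - c * c' - d * d', a * b' + b * a' + c * d' - d * c',
     a * c' - b * d' + c * a' + d * b', a * d' + b * c' - c * b' + d * a'⟩ : Quaternion ℝ) := by
  exact qmk_mul _ _ _ _ _
lemma qmk_eq_iff (a b c d : ℝ) (p : Quaternion ℝ) : @Eq (Quaternion ℝ) ⟨a, b, c, d⟩ p ↔
    a = p.re ∧ b = p.imI ∧ c = p.imJ ∧ d = p.imK := by
  constructor
  · rintro rfl; exact ⟨rfl, rfl, rfl, rfl⟩
  · rintro ⟨rfl, rfl, rfl, rfl⟩; rfl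

set_option maxHeartbeats 2000000 in
lemma part1 (a : Fin 9) : ∀ p q : Oct × Oct, octInner2 (S9 a p) q = octInner2 p (S9 a q) := by
  rintro ⟨⟨p1,p2⟩,⟨p3,p4⟩⟩ ⟨⟨q1,q2⟩,⟨q3,q4⟩⟩
  fin_cases a <;>
  · simp only [S9_0, S9_1, S9_2, S9_3, S9_4, S9_5, S9_6, S9_7, S9_8, Sblk, octMul,
      octInner2, octInner]
    simp [Quaternion.ext_iff, Quaternion.re_zero, Quaternion.imI_zero, Quaternion.imJ_zero, Quaternion.imK_zero, Quaternion.re_one, Quaternion.imI_one, Quaternion.imJ_one, Quaternion.imK_one, qmk_mul_mk, qmk_eq_iff, qmul_mk, qmk_mul, qstar_mk, qsub_zero, qzero_sub, qadd_zero, qzero_add, qneg_mk, qadd_mk, qsub_mk, Quaternion.re_mul, Quaternion.imI_mul, Quaternion.imJ_mul, Quaternion.imK_mul]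
    try ring

set_option maxHeartbeats 2000000 in
lemma part2 (a : Fin 9) : ∀ p : Oct × Oct, S9 a (S9 a p) = p := by
  rintro ⟨⟨p1,p2⟩,⟨p3,p4⟩⟩
  fin_cases a <;>
  · simp only [S9_0, S9_1, S9_2, S9_3, S9_4, S9_5, S9_6, S9_7, S9_8, Sblk, octMul]
    try simp [Prod.ext_iff, Quaternion.ext_iff, Quaternion.re_zero, Quaternion.imI_zero, Quaternion.imJ_zero, Quaternion.imK_zero, Quaternion.re_one, Quaternion.imI_one, Quaternion.imJ_one, Quaternion.imK_one, qmk_mul_mk, qmk_eq_iff, qmul_mk, qmk_mul, qstar_mk, qsub_zero, qzero_sub, qadd_zero, qzero_add, qneg_mk, qadd_mk, qsub_mk, Quaternion.re_mul, Quaternion.imI_mul, Quaternion.imJ_mul, Quaternion.imK_mul]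
    try ring

set_option maxHeartbeats 8000000 in
lemma part3 (a b : Fin 9) (hab : a ≠ b) :
    ∀ p : Oct × Oct, S9 a (S9 b p) + S9 b (S9 a p) = 0 := by
  rintro ⟨⟨p1,p2⟩,⟨p3,p4⟩⟩
  fin_cases a <;> fin_cases b <;>
    first
    | exact absurd rfl hab
    | (simp only [S9_0, S9_1, S9_2, S9_3, S9_4, S9_5, S9_6, S9_7, S9_8, Sblk, octMul]
       try simp [Prod.ext_iff, Quaternion.ext_iff, Quaternion.re_zero, Quaternion.imI_zero, Quaternion.imJ_zero, Quaternion.imK_zero, Quaternion.re_one, Quaternion.imI_one, Quaternion.imJ_one, Quaternion.imK_one, qmk_mul_mk, qmk_eq_iff, qmul_mk, qmk_mul, qstar_mk, qsub_zero, qzero_sub, qadd_zero, qzero_add, qneg_mk, qadd_mk, qsub_mk, Quaternion.re_mul, Quaternion.imI_mul, Quaternion.imJ_mul, Quaternion.imK_mul]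
       try ring)


theorem stmt_15 :
    (∀ a : Fin 9,
        (∀ p q : Oct × Oct, octInner2 (S9 a p) q = octInner2 p (S9 a q)) ∧
          ∀ p : Oct × Oct, S9 a (S9 a p) = p) ∧
      ∀ a b : Fin 9, a ≠ b → ∀ p : Oct × Oct, S9 a (S9 b p) + S9 b (S9 a p) = 0 := by
  exact ⟨fun a => ⟨part1 a, part2 a⟩, part3⟩
end
end

section
/- For the Clifford system C₂ on ℝ⁴ given by the real Pauli matrices P₀, P₁, P₂, the stabilizer of the 3-dimensional subspace E³ = span(P₀,P₁,P₂) ⊂ End(ℝ⁴) under conjugation contains Sp(1)·U(1): for every unit quaternion q, conjugation by left multiplication L_q maps E³ to itself. -/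
/-- The first real Pauli matrix `P₀ = [[0,Id],[Id,0]]`, viewed as an ℝ-linear map of
`ℍ ≅ ℝ⁴` via the identification `(x₁,x₂,x₃,x₄) ↦ x₁ + x₂ i + x₃ j - x₄ k`. -/
def P0q : Quaternion ℝ → Quaternion ℝ := fun x => ⟨x.imJ, -x.imK, x.re, -x.imI⟩

/-- The second real Pauli matrix `P₁ = [[0,-N₀₁],[N₀₁,0]]`, viewed as an ℝ-linear map of
`ℍ ≅ ℝ⁴` via the identification `(x₁,x₂,x₃,x₄) ↦ x₁ + x₂ i + x₃ j - x₄ k`. -/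
def P1q : Quaternion ℝ → Quaternion ℝ := fun x => ⟨-x.imK, -x.imJ, -x.imI, -x.re⟩

/-- The third real Pauli matrix `P₂ = [[Id,0],[0,-Id]]`, viewed as an ℝ-linear map of
`ℍ ≅ ℝ⁴` via the identification `(x₁,x₂,x₃,x₄) ↦ x₁ + x₂ i + x₃ j - x₄ k`. -/
def P2q : Quaternion ℝ → Quaternion ℝ := fun x => ⟨x.re, x.imI, -x.imJ, -x.imK⟩

lemma key0 (p x : Quaternion ℝ) :
    p * P0q (star p * x) =
      (p.re ^ 2 - p.imI ^ 2 - p.imJ ^ 2 + p.imK ^ 2) • P0q x +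
      (-2 * p.re * p.imI + 2 * p.imJ * p.imK) • P1q x +
      (-2 * p.re * p.imJ - 2 * p.imI * p.imK) • P2q x := by
  ext <;>
    simp only [Quaternion.re_mul, Quaternion.imI_mul, Quaternion.imJ_mul, Quaternion.imK_mul,
      Quaternion.re_add, Quaternion.imI_add, Quaternion.imJ_add, Quaternion.imK_add,
      Quaternion.re_smul, Quaternion.imI_smul, Quaternion.imJ_smul, Quaternion.imK_smul] <;>
    simp only [P0q, P1q, P2q, Quaternion.re_mul, Quaternion.imI_mul, Quaternion.imJ_mul,
      Quaternion.imK_mul, Quaternion.re_star, Quaternion.imI_star, Quaternion.imJ_star,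
      Quaternion.imK_star, Quaternion.re_add, Quaternion.imI_add, Quaternion.imJ_add,
      Quaternion.imK_add, Quaternion.re_smul, Quaternion.imI_smul, Quaternion.imJ_smul,
      Quaternion.imK_smul, smul_eq_mul] <;> ring

lemma key1 (p x : Quaternion ℝ) :
    p * P1q (star p * x) =
      (2 * p.re * p.imI + 2 * p.imJ * p.imK) • P0q x +
      (p.re ^ 2 - p.imI ^ 2 + p.imJ ^ 2 - p.imK ^ 2) • P1q x +
      (2 * p.re * p.imK - 2 * p.imI * p.imJ) • P2q x := by
  ext <;>
    simp only [Quaternion.re_mul, Quaternion.imI_mul, Quaternion.imJ_mul, Quaternion.imK_mul,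
      Quaternion.re_add, Quaternion.imI_add, Quaternion.imJ_add, Quaternion.imK_add,
      Quaternion.re_smul, Quaternion.imI_smul, Quaternion.imJ_smul, Quaternion.imK_smul] <;>
    simp only [P0q, P1q, P2q, Quaternion.re_mul, Quaternion.imI_mul, Quaternion.imJ_mul,
      Quaternion.imK_mul, Quaternion.re_star, Quaternion.imI_star, Quaternion.imJ_star,
      Quaternion.imK_star, Quaternion.re_add, Quaternion.imI_add, Quaternion.imJ_add,
      Quaternion.imK_add, Quaternion.re_smul, Quaternion.imI_smul, Quaternion.imJ_smul,
      Quaternion.imK_smul, smul_eq_mul] <;> ring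

lemma key2 (p x : Quaternion ℝ) :
    p * P2q (star p * x) =
      (2 * p.re * p.imJ - 2 * p.imI * p.imK) • P0q x +
      (-2 * p.re * p.imK - 2 * p.imI * p.imJ) • P1q x +
      (p.re ^ 2 + p.imI ^ 2 - p.imJ ^ 2 - p.imK ^ 2) • P2q x := by
  ext <;>
    simp only [Quaternion.re_mul, Quaternion.imI_mul, Quaternion.imJ_mul, Quaternion.imK_mul,
      Quaternion.re_add, Quaternion.imI_add, Quaternion.imJ_add, Quaternion.imK_add,
      Quaternion.re_smul, Quaternion.imI_smul, Quaternion.imJ_smul, Quaternion.imK_smul] <;>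
    simp only [P0q, P1q, P2q, Quaternion.re_mul, Quaternion.imI_mul, Quaternion.imJ_mul,
      Quaternion.imK_mul, Quaternion.re_star, Quaternion.imI_star, Quaternion.imJ_star,
      Quaternion.imK_star, Quaternion.re_add, Quaternion.imI_add, Quaternion.imJ_add,
      Quaternion.imK_add, Quaternion.re_smul, Quaternion.imI_smul, Quaternion.imJ_smul,
      Quaternion.imK_smul, smul_eq_mul] <;> ring

theorem stmt_18 (q : Quaternion ℝ) (hq : ‖q‖ = 1) :
    ∀ S ∈ Submodule.span ℝ ({P0q, P1q, P2q} : Set (Quaternion ℝ → Quaternion ℝ)),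
      (fun x => q * S (q⁻¹ * x)) ∈
        Submodule.span ℝ ({P0q, P1q, P2q} : Set (Quaternion ℝ → Quaternion ℝ)) := by
  intro S hS
  have hinv : q⁻¹ = star q := by
    rw [Quaternion.inv_def, Quaternion.normSq_eq_norm_mul_self, hq]
    simp
  set E := Submodule.span ℝ ({P0q, P1q, P2q} : Set (Quaternion ℝ → Quaternion ℝ))
  have h0 : P0q ∈ E := Submodule.subset_span (by simp)
  have h1 : P1q ∈ E := Submodule.subset_span (by simp)
  have h2 : P2q ∈ E := Submodule.subset_span (by simp)
  induction hS using Submodule.span_induction with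
  | mem T hT =>
    rcases hT with rfl | rfl | rfl
    · have : (fun x => q * P0q (q⁻¹ * x)) =
        (q.re ^ 2 - q.imI ^ 2 - q.imJ ^ 2 + q.imK ^ 2) • P0q +
        (-2 * q.re * q.imI + 2 * q.imJ * q.imK) • P1q +
        (-2 * q.re * q.imJ - 2 * q.imI * q.imK) • P2q := by
        funext x; rw [hinv]; exact key0 q x
      rw [this]
      exact add_mem (add_mem (E.smul_mem _ h0) (E.smul_mem _ h1)) (E.smul_mem _ h2)
    · have : (fun x => q * P1q (q⁻¹ * x)) =
        (2 * q.re * q.imI + 2 * q.imJ * q.imK) • P0q +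
        (q.re ^ 2 - q.imI ^ 2 + q.imJ ^ 2 - q.imK ^ 2) • P1q +
        (2 * q.re * q.imK - 2 * q.imI * q.imJ) • P2q := by
        funext x; rw [hinv]; exact key1 q x
      rw [this]
      exact add_mem (add_mem (E.smul_mem _ h0) (E.smul_mem _ h1)) (E.smul_mem _ h2)
    · have : (fun x => q * P2q (q⁻¹ * x)) =
        (2 * q.re * q.imJ - 2 * q.imI * q.imK) • P0q +
        (-2 * q.re * q.imK - 2 * q.imI * q.imJ) • P1q +
        (q.re ^ 2 + q.imI ^ 2 - q.imJ ^ 2 - q.imK ^ 2) • P2q := by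
        funext x; rw [hinv]; exact key2 q x
      rw [this]
      exact add_mem (add_mem (E.smul_mem _ h0) (E.smul_mem _ h1)) (E.smul_mem _ h2)
  | zero =>
    have : (fun x => q * (0 : Quaternion ℝ → Quaternion ℝ) (q⁻¹ * x)) =
        (0 : Quaternion ℝ → Quaternion ℝ) := by
      funext x; simp
    rw [this]; exact E.zero_mem
  | add T U _ _ hT hU =>
    have : (fun x => q * (T + U) (q⁻¹ * x)) =
        (fun x => q * T (q⁻¹ * x)) + fun x => q * U (q⁻¹ * x) := by
      funext x; simp [mul_add]
    rw [this]; exact add_mem hT hU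
  | smul c T _ hT =>
    have : (fun x => q * (c • T) (q⁻¹ * x)) = c • fun x => q * T (q⁻¹ * x) := by
      funext x
      simp [mul_smul_comm]
    rw [this]; exact E.smul_mem c hT
end
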